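/- arXiv:1310.1732 — 7 statements merged into one kernel-verified Lean document; each statement's English description precedes it below -/
import Mathlib

section
/- Let n1 ≥ n2 ≥ n3 ≥ 0 be reals and R12, R13, R21, R23, R31, R32 nonnegative reals satisfying R31+R32 ≤ n3, R13+R23 ≤ n3, R21+R31+R23 ≤ n2, and R13+R23+R12 ≤ n2. Define R12^b = min(R12,R21), R13^b = min(R13,R31), R23^b = min(R23,R32), R12' = R12−R12^b, R23' = R23−R23^b, R31' = R31−R13^b, R123^c = min(R12',R23',R31'), n2' = n2−R12^b−R13^b−R23^b, and n3' = min(n3−R13^b−R23^b, n2'). Then R123^c ≤ n3' and 2·R123^c ≤ n2', i.e., the remaining relay levels suffice for the cyclic strategy serving the cycle 1→2→3→1. -/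
theorem stmt_3
    (n1 n2 n3 : ℝ) (hn12 : n2 ≤ n1) (hn23 : n3 ≤ n2) (hn3 : 0 ≤ n3)
    (R12 R13 R21 R23 R31 R32 : ℝ)
    (h12 : 0 ≤ R12) (h13 : 0 ≤ R13) (h21 : 0 ≤ R21)
    (h23 : 0 ≤ R23) (h31 : 0 ≤ R31) (h32 : 0 ≤ R32)
    (hA : R31 + R32 ≤ n3) (hB : R13 + R23 ≤ n3)
    (hC : R21 + R31 + R23 ≤ n2) (hD : R13 + R23 + R12 ≤ n2)
    (R12b R13b R23b : ℝ)
    (hR12b : R12b = min R12 R21) (hR13b : R13b = min R13 R31)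
    (hR23b : R23b = min R23 R32)
    (R12' R23' R31' : ℝ)
    (hR12' : R12' = R12 - R12b) (hR23' : R23' = R23 - R23b)
    (hR31' : R31' = R31 - R13b)
    (R123c : ℝ) (hR123c : R123c = min R12' (min R23' R31'))
    (n2' n3' : ℝ)
    (hn2' : n2' = n2 - R12b - R13b - R23b)
    (hn3' : n3' = min (n3 - R13b - R23b) n2') :
    R123c ≤ n3' ∧ 2 * R123c ≤ n2' := by
  have hb12 : R12b ≤ R21 := hR12b ▸ min_le_right _ _
  have hb13 : R13b ≤ R13 := hR13b ▸ min_le_left _ _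
  have hb23 : R23b ≤ R23 := hR23b ▸ min_le_left _ _
  have hb23' : R23b ≤ R32 := hR23b ▸ min_le_right _ _
  have hc12 : R123c ≤ R12' := hR123c ▸ min_le_left _ _
  have hc23 : R123c ≤ R23' := hR123c ▸ le_trans (min_le_right _ _) (min_le_left _ _)
  have hc31 : R123c ≤ R31' := hR123c ▸ le_trans (min_le_right _ _) (min_le_right _ _)
  have h1 : R123c ≤ n2' := by
    calc R123c ≤ R12' := hc12
      _ ≤ n2' := by rw [hR12', hn2']; linarith
  constructor
  · rw [hn3', le_min_iff]
    refine ⟨?_, h1⟩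
    calc R123c ≤ R31' := hc31
      _ ≤ n3 - R13b - R23b := by rw [hR31']; linarith
  · rw [hn2']
    have : R23' + R31' ≤ n2 - R12b - R13b - R23b := by
      rw [hR23', hR31']; linarith
    linarith
end

section
/- Let n1 ≥ n2 ≥ n3 ≥ 0 be reals and R12, R13, R21, R23, R31, R32 nonnegative reals satisfying R13+R23 ≤ n3, R12+R32+R13 ≤ n2, R21+R31+R32 ≤ n2, and R13+R23+R12 ≤ n2. Define R12^b = min(R12,R21), R13^b = min(R13,R31), R23^b = min(R23,R32), R13' = R13−R13^b, R32' = R32−R23^b, R21' = R21−R12^b, R132^c = min(R13',R32',R21'), n2' = n2−R12^b−R13^b−R23^b, and n3' = min(n3−R13^b−R23^b, n2'). Then R132^c ≤ n3' and 2·R132^c ≤ n2', i.e., the remaining relay levels suffice for the cyclic strategy serving the cycle 1→3→2→1. -/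
theorem stmt_4
    (n1 n2 n3 : ℝ) (hn12 : n2 ≤ n1) (hn23 : n3 ≤ n2) (hn3 : 0 ≤ n3)
    (R12 R13 R21 R23 R31 R32 : ℝ)
    (h12 : 0 ≤ R12) (h13 : 0 ≤ R13) (h21 : 0 ≤ R21)
    (h23 : 0 ≤ R23) (h31 : 0 ≤ R31) (h32 : 0 ≤ R32)
    (hA : R13 + R23 ≤ n3) (hB : R12 + R32 + R13 ≤ n2)
    (hC : R21 + R31 + R32 ≤ n2) (hD : R13 + R23 + R12 ≤ n2)
    (R12b R13b R23b : ℝ)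
    (hR12b : R12b = min R12 R21) (hR13b : R13b = min R13 R31)
    (hR23b : R23b = min R23 R32)
    (R13' R32' R21' : ℝ)
    (hR13' : R13' = R13 - R13b) (hR32' : R32' = R32 - R23b)
    (hR21' : R21' = R21 - R12b)
    (R132c : ℝ) (hR132c : R132c = min R13' (min R32' R21'))
    (n2' n3' : ℝ)
    (hn2' : n2' = n2 - R12b - R13b - R23b)
    (hn3' : n3' = min (n3 - R13b - R23b) n2') :
    R132c ≤ n3' ∧ 2 * R132c ≤ n2' := by
  have h1 : R12b ≤ R12 := hR12b ▸ min_le_left _ _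
  have h2 : R13b ≤ R13 := hR13b ▸ min_le_left _ _
  have h3 : R23b ≤ R23 := hR23b ▸ min_le_left _ _
  have h4 : R23b ≤ R32 := hR23b ▸ min_le_right _ _
  have h5 : R12b ≤ R21 := hR12b ▸ min_le_right _ _
  have hc1 : R132c ≤ R13' := hR132c ▸ min_le_left _ _
  have hc2 : R132c ≤ R32' := hR132c ▸ le_trans (min_le_right _ _) (min_le_left _ _)
  have hc3 : R132c ≤ R21' := hR132c ▸ le_trans (min_le_right _ _) (min_le_right _ _)
  have h2' : 2 * R132c ≤ n2' := by nlinarith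
  refine ⟨?_, h2'⟩
  rw [hn3', le_min_iff]
  constructor
  · nlinarith
  · nlinarith
end

section
/- Let n1 ≥ n2 ≥ n3 ≥ 0 be reals and let the nonnegative rate tuple (R12,R13,R21,R23,R31,R32) lie in the outer bound region C̄_d. With the bi-directional rates, residual rates, cyclic rates, double-primed rates and reduced levels n1'', n2'', n3'' defined as in the deterministic Y-channel scheme, the following hold: R23'' + R13'' ≤ n3'' and R12'' + R13'' + R23'' ≤ n2''. Hence the remaining relay levels suffice to serve the uni-directional streams in the case where R21'' = R31'' = R32'' = 0. -/
theorem stmt_5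
    (n1 n2 n3 : ℝ) (hn12 : n2 ≤ n1) (hn23 : n3 ≤ n2) (hn3 : 0 ≤ n3)
    (R12 R13 R21 R23 R31 R32 : ℝ)
    (h12 : 0 ≤ R12) (h13 : 0 ≤ R13) (h21 : 0 ≤ R21)
    (h23 : 0 ≤ R23) (h31 : 0 ≤ R31) (h32 : 0 ≤ R32)
    (R12b R13b R23b : ℝ)
    (hR12b : R12b = min R12 R21) (hR13b : R13b = min R13 R31)
    (hR23b : R23b = min R23 R32)
    (R12' R21' R13' R31' R23' R32' : ℝ)
    (hR12' : R12' = R12 - R12b) (hR21' : R21' = R21 - R12b)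
    (hR13' : R13' = R13 - R13b) (hR31' : R31' = R31 - R13b)
    (hR23' : R23' = R23 - R23b) (hR32' : R32' = R32 - R23b)
    (R123c R132c : ℝ)
    (hR123c : R123c = min R12' (min R23' R31'))
    (hR132c : R132c = min R13' (min R32' R21'))
    (n1' n2' n3' : ℝ)
    (hn1' : n1' = n1 - R12b - R13b - R23b)
    (hn2' : n2' = n2 - R12b - R13b - R23b)
    (hn3' : n3' = min (n3 - R13b - R23b) n2')
    (R12'' R23'' R31'' R13'' R32'' R21'' : ℝ)
    (hR12pp : R12'' = R12' - R123c) (hR23pp : R23'' = R23' - R123c)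
    (hR31pp : R31'' = R31' - R123c) (hR13pp : R13'' = R13' - R132c)
    (hR32pp : R32'' = R32' - R132c) (hR21pp : R21'' = R21' - R132c)
    (n1'' n2'' n3'' : ℝ)
    (hn1pp : n1'' = n1' - 2 * R123c - 2 * R132c)
    (hn2pp : n2'' = n2' - 2 * R123c - 2 * R132c)
    (hn3pp : n3'' = min (n3' - R123c - R132c) n2'')
    (hC1 : R31 + R32 ≤ n3) (hC2 : R13 + R23 ≤ n3)
    (hC3 : R12 + R32 + R13 ≤ n2) (hC4 : R12 + R32 + R31 ≤ n1)
    (hC5 : R21 + R31 + R32 ≤ n2) (hC6 : R21 + R31 + R23 ≤ n2)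
    (hC7 : R13 + R23 + R12 ≤ n2) (hC8 : R13 + R23 + R21 ≤ n1)
    : R23'' + R13'' ≤ n3'' ∧ R12'' + R13'' + R23'' ≤ n2'' := by
  have p12 : 0 ≤ R12' := by rw [hR12', hR12b]; linarith [min_le_left R12 R21]
  have p21 : 0 ≤ R21' := by rw [hR21', hR12b]; linarith [min_le_right R12 R21]
  have p13 : 0 ≤ R13' := by rw [hR13', hR13b]; linarith [min_le_left R13 R31]
  have p31 : 0 ≤ R31' := by rw [hR31', hR13b]; linarith [min_le_right R13 R31]
  have p23 : 0 ≤ R23' := by rw [hR23', hR23b]; linarith [min_le_left R23 R32]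
  have p32 : 0 ≤ R32' := by rw [hR32', hR23b]; linarith [min_le_right R23 R32]
  have pc1 : 0 ≤ R123c := by rw [hR123c]; exact le_min p12 (le_min p23 p31)
  have pc2 : 0 ≤ R132c := by rw [hR132c]; exact le_min p13 (le_min p32 p21)
  have lc11 : R123c ≤ R12' := by rw [hR123c]; exact min_le_left _ _
  have lb11 : R12b ≤ R12 := by rw [hR12b]; exact min_le_left _ _
  have lc22 : R132c ≤ R32' := by
    rw [hR132c]; exact le_trans (min_le_right _ _) (min_le_left _ _)
  have hG2 : R12'' + R13'' + R23'' ≤ n2'' := by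
    rw [hR12pp, hR13pp, hR23pp, hn2pp, hn2', hR12', hR13', hR23']
    rcases le_total R23 R32 with h | h
    · have hb : R23b = R23 := by rw [hR23b]; exact min_eq_left h
      have : R132c ≤ R32 - R23 := by rw [hR32', hb] at lc22; linarith
      linarith
    · have hb : R23b = R32 := by rw [hR23b]; exact min_eq_right h
      have : R132c ≤ 0 := by rw [hR32', hb] at lc22; linarith
      linarith
  refine ⟨?_, hG2⟩
  rw [hn3pp]
  refine le_min ?_ ?_
  · rw [hn3']
    have h1 : R23'' + R13'' + R123c + R132c ≤ n3 - R13b - R23b := by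
      rw [hR23pp, hR13pp, hR23', hR13']
      linarith
    have h2 : R23'' + R13'' + R123c + R132c ≤ n2' := by
      rw [hR23pp, hR13pp, hR23', hR13', hn2']
      linarith
    have := le_min h1 h2
    linarith
  · have : 0 ≤ R12'' := by rw [hR12pp]; linarith
    linarith
end

section
/- Let n1 ≥ n2 ≥ n3 ≥ 0 be reals and let the nonnegative rate tuple (R12,R13,R21,R23,R31,R32) lie in the outer bound region C̄_d. With the deterministic Y-channel scheme quantities defined as in the context, if R13'' = R12'' = R32'' = 0 then R31'' ≤ n3'', R23'' ≤ n3'', and R21'' + R31'' + R23'' ≤ n2''. -/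
theorem stmt_7
    (n1 n2 n3 : ℝ) (hn12 : n2 ≤ n1) (hn23 : n3 ≤ n2) (hn3 : 0 ≤ n3)
    (R12 R13 R21 R23 R31 R32 : ℝ)
    (h12 : 0 ≤ R12) (h13 : 0 ≤ R13) (h21 : 0 ≤ R21)
    (h23 : 0 ≤ R23) (h31 : 0 ≤ R31) (h32 : 0 ≤ R32)
    (R12b R13b R23b : ℝ)
    (hR12b : R12b = min R12 R21) (hR13b : R13b = min R13 R31)
    (hR23b : R23b = min R23 R32)
    (R12' R21' R13' R31' R23' R32' : ℝ)
    (hR12' : R12' = R12 - R12b) (hR21' : R21' = R21 - R12b)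
    (hR13' : R13' = R13 - R13b) (hR31' : R31' = R31 - R13b)
    (hR23' : R23' = R23 - R23b) (hR32' : R32' = R32 - R23b)
    (R123c R132c : ℝ)
    (hR123c : R123c = min R12' (min R23' R31'))
    (hR132c : R132c = min R13' (min R32' R21'))
    (n1' n2' n3' : ℝ)
    (hn1' : n1' = n1 - R12b - R13b - R23b)
    (hn2' : n2' = n2 - R12b - R13b - R23b)
    (hn3' : n3' = min (n3 - R13b - R23b) n2')
    (R12'' R23'' R31'' R13'' R32'' R21'' : ℝ)
    (hR12pp : R12'' = R12' - R123c) (hR23pp : R23'' = R23' - R123c)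
    (hR31pp : R31'' = R31' - R123c) (hR13pp : R13'' = R13' - R132c)
    (hR32pp : R32'' = R32' - R132c) (hR21pp : R21'' = R21' - R132c)
    (n1'' n2'' n3'' : ℝ)
    (hn1pp : n1'' = n1' - 2 * R123c - 2 * R132c)
    (hn2pp : n2'' = n2' - 2 * R123c - 2 * R132c)
    (hn3pp : n3'' = min (n3' - R123c - R132c) n2'')
    (hC1 : R31 + R32 ≤ n3) (hC2 : R13 + R23 ≤ n3)
    (hC3 : R12 + R32 + R13 ≤ n2) (hC4 : R12 + R32 + R31 ≤ n1)
    (hC5 : R21 + R31 + R32 ≤ n2) (hC6 : R21 + R31 + R23 ≤ n2)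
    (hC7 : R13 + R23 + R12 ≤ n2) (hC8 : R13 + R23 + R21 ≤ n1)
    (hcase : R13'' = 0 ∧ R12'' = 0 ∧ R32'' = 0)
    : R31'' ≤ n3'' ∧ R23'' ≤ n3'' ∧ R21'' + R31'' + R23'' ≤ n2'' := by
  obtain ⟨hA, hB, hC⟩ := hcase
  have e132 : R132c = R13' := by linarith [hR13pp]
  have e132' : R132c = R32' := by linarith [hR32pp]
  have e123 : R123c = R12' := by linarith [hR12pp]
  have l1 : R123c ≤ R23' := by
    rw [hR123c]; exact le_trans (min_le_right _ _) (min_le_left _ _)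
  have l2 : R123c ≤ R31' := by
    rw [hR123c]; exact le_trans (min_le_right _ _) (min_le_right _ _)
  have l3 : R132c ≤ R21' := by
    rw [hR132c]; exact le_trans (min_le_right _ _) (min_le_right _ _)
  have b1 : R12b ≤ R12 := hR12b ▸ min_le_left _ _
  have b1' : R12b ≤ R21 := hR12b ▸ min_le_right _ _
  have b2 : R13b ≤ R13 := hR13b ▸ min_le_left _ _
  have b2' : R13b ≤ R31 := hR13b ▸ min_le_right _ _
  have b3 : R23b ≤ R23 := hR23b ▸ min_le_left _ _
  have b3' : R23b ≤ R32 := hR23b ▸ min_le_right _ _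
  rcases min_choice R12 R21 with e1 | e1 <;> rw [← hR12b] at e1 <;>
  rcases min_choice R13 R31 with e2 | e2 <;> rw [← hR13b] at e2 <;>
  rcases min_choice R23 R32 with e3 | e3 <;> rw [← hR23b] at e3 <;>
  · refine ⟨?_, ?_, ?_⟩
    · rw [hn3pp]
      refine le_min ?_ (by linarith)
      have : R31'' + R123c + R132c ≤ n3' := by
        rw [hn3']; exact le_min (by linarith) (by linarith)
      linarith
    · rw [hn3pp]
      refine le_min ?_ (by linarith)
      have : R23'' + R123c + R132c ≤ n3' := by
        rw [hn3']; exact le_min (by linarith) (by linarith)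
      linarith
    · linarith
end

section
/- (Gap analysis, Case 1: R12 ≥ R21, R13 ≥ R31, R23 ≥ R32.) Suppose the nonnegative rate tuple lies in C̲'_g and additionally R12 ≥ R21, R13 ≥ R31, R23 ≥ R32. Define α32^b = (2^{2R32+1}−1)/(2h3²P), α31^b = 2^{2R32+1}(2^{2R31+1}−1)/(2h3²P), α21^b = 2^{2R31+2R32+2}(2^{2R21+1}−1)/(2h2²P), α23^u = 2^{2R21+2R31+2R32+3}(2^{2(R23−R32)}−1)/(h2²P), α13^u = 2^{2R21+2R31+2R23+3}(2^{2(R13−R31)}−1)/(h1²P), α12^u = 2^{2R21+2R13+2R23+3}(2^{2(R12−R21)}−1)/(h1²P), and α23^b = (h3²/h2²)α32^b, α13^b = (h3²/h1²)α31^b, α12^b = (h2²/h1²)α21^b. Then α31^b+α32^b ≤ 1, α21^b+α23^b+α23^u ≤ 1, α12^b+α13^b+α12^u+α13^u ≤ 1, and (2^{2(R13+R23)}−1)/(h3²P) + 2^{2(R13+R23)}(2^{2R12}−1)/(h2²P) ≤ 1. -/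
/-! After the substitution `x_ij = 2 ^ (2 R_ij)` each sum of power-allocation parameters is a single
fraction whose numerator telescopes to essentially one product of the `x_ij`, and each constraint
of `C̲'_g` reads `2 ^ (2 k) · ∏ x_ij ≤ 1 + SNR`. The slack `2 ^ (2 k)` (`k = 2, 3, 7/2`) absorbs the
constants left over. The coherent SNR `(|h2| + |h3|)² P` is at most `4 h2² P`, and `R32 ≤ R23`
makes the leftover term at user 1 nonpositive. -/

noncomputable def Cg (x : ℝ) : ℝ := (1 / 2) * Real.logb 2 (1 + x)

open Real

lemma two_rpow_two_mul_add_le_of_le_Cg {x R k : ℝ} (hx : 0 < 1 + x) (h : R ≤ Cg x - k) :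
    (2 : ℝ) ^ (2 * (R + k)) ≤ 1 + x := by
  rw [← le_logb_iff_rpow_le one_lt_two hx]
  unfold Cg at h
  linarith

lemma one_le_two_rpow_two_mul {R : ℝ} (hR : 0 ≤ R) : 1 ≤ (2 : ℝ) ^ (2 * R) :=
  one_le_rpow one_le_two (by positivity)

lemma abs_add_abs_sq_le {a b : ℝ} (hab : b ^ 2 ≤ a ^ 2) : (|a| + |b|) ^ 2 ≤ 4 * a ^ 2 := by
  have hba : |b| ≤ |a| := sq_le_sq.1 hab
  nlinarith [sq_abs a, abs_nonneg b]

lemma user3_alloc_le_one {g P R31 R32 : ℝ} (hgP : 0 < g * P)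
    (hG : R31 + R32 ≤ Cg (g * P) - 2) :
    (2:ℝ) ^ (2 * R32 + 1) * ((2:ℝ) ^ (2 * R31 + 1) - 1) / (2 * g * P)
      + ((2:ℝ) ^ (2 * R32 + 1) - 1) / (2 * g * P) ≤ 1 := by
  have h := two_rpow_two_mul_add_le_of_le_Cg (by linarith) hG
  simp only [mul_add, rpow_add two_pos, rpow_one] at h ⊢
  norm_num at h
  rw [← add_div, div_le_one (by linarith)]
  linarith

lemma user2_alloc_le_one {g2 g3 P x R21 R23 R31 R32 : ℝ} (hP : 0 < P) (hg3 : 0 < g3)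
    (hg23 : g3 ≤ g2) (hr21 : 0 ≤ R21) (hr23 : 0 ≤ R23) (hr31 : 0 ≤ R31)
    (hG : R21 + R31 + R23 ≤ Cg x - 7 / 2) (hx0 : 0 ≤ x) (hx : x ≤ 4 * g2 * P) :
    (2:ℝ) ^ (2 * R31 + 2 * R32 + 2) * ((2:ℝ) ^ (2 * R21 + 1) - 1) / (2 * g2 * P)
      + g3 / g2 * (((2:ℝ) ^ (2 * R32 + 1) - 1) / (2 * g3 * P))
      + (2:ℝ) ^ (2 * R21 + 2 * R31 + 2 * R32 + 3) * ((2:ℝ) ^ (2 * (R23 - R32)) - 1) / (g2 * P)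
      ≤ 1 := by
  have hg2 : 0 < g2 := hg3.trans_le hg23
  have h := two_rpow_two_mul_add_le_of_le_Cg (by linarith) hG
  have hu := one_le_two_rpow_two_mul hr21
  have hv := one_le_two_rpow_two_mul hr31
  have hd := one_le_two_rpow_two_mul hr23
  have hw : 0 < (2:ℝ) ^ (2 * R32) := by positivity
  simp only [mul_add, mul_sub, rpow_add two_pos, rpow_sub two_pos, rpow_one] at h ⊢
  norm_num at h ⊢
  generalize (2:ℝ) ^ (2 * R21) = u at *
  generalize (2:ℝ) ^ (2 * R31) = v at *
  generalize (2:ℝ) ^ (2 * R32) = w at *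
  generalize (2:ℝ) ^ (2 * R23) = d at *
  have hsum : (v * w * 4 * (u * 2) - v * w * 4) / (2 * g2 * P)
      + g3 / g2 * ((w * 2 - 1) / (2 * g3 * P))
      + (u * v * w * 8 * (d / w) - u * v * w * 8) / (g2 * P)
      = (16 * (u * v * d) - 8 * (u * v * w) - 4 * (v * w) + 2 * w - 1) / (2 * g2 * P) := by
    field_simp
    ring
  rw [hsum, div_le_one (by positivity)]
  have huv : 1 ≤ u * v := one_le_mul_of_one_le_of_one_le hu hv
  have huvd : 1 ≤ u * v * d := one_le_mul_of_one_le_of_one_le huv hd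
  linarith [mul_pos (zero_lt_one.trans_le huv) hw, mul_le_mul_of_nonneg_right hv hw.le]

lemma user1_alloc_le_one {g1 g2 g3 P R12 R13 R21 R23 R31 R32 : ℝ} (hP : 0 < P) (hg3 : 0 < g3)
    (hg23 : g3 ≤ g2) (hg12 : g2 ≤ g1) (hr12 : 0 ≤ R12) (hr13 : 0 ≤ R13) (hr23 : 0 ≤ R23)
    (hc : R32 ≤ R23) (hG : R13 + R23 + R12 ≤ Cg (g2 * P + g3 * P) - 3) :
    g2 / g1 * ((2:ℝ) ^ (2 * R31 + 2 * R32 + 2) * ((2:ℝ) ^ (2 * R21 + 1) - 1) / (2 * g2 * P))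
      + g3 / g1 * ((2:ℝ) ^ (2 * R32 + 1) * ((2:ℝ) ^ (2 * R31 + 1) - 1) / (2 * g3 * P))
      + (2:ℝ) ^ (2 * R21 + 2 * R13 + 2 * R23 + 3) * ((2:ℝ) ^ (2 * (R12 - R21)) - 1) / (g1 * P)
      + (2:ℝ) ^ (2 * R21 + 2 * R31 + 2 * R23 + 3) * ((2:ℝ) ^ (2 * (R13 - R31)) - 1) / (g1 * P)
      ≤ 1 := by
  have hg2 : 0 < g2 := hg3.trans_le hg23
  have hg1 : 0 < g1 := hg2.trans_le hg12
  have h := two_rpow_two_mul_add_le_of_le_Cg (by positivity) hG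
  have hf := one_le_two_rpow_two_mul hr12
  have he := one_le_two_rpow_two_mul hr13
  have hd := one_le_two_rpow_two_mul hr23
  have hwd : (2:ℝ) ^ (2 * R32) ≤ (2:ℝ) ^ (2 * R23) :=
    rpow_le_rpow_of_exponent_le one_le_two (by linarith)
  have hu : 0 < (2:ℝ) ^ (2 * R21) := by positivity
  have hv : 0 < (2:ℝ) ^ (2 * R31) := by positivity
  have hw : 0 < (2:ℝ) ^ (2 * R32) := by positivity
  simp only [mul_add, mul_sub, rpow_add two_pos, rpow_sub two_pos, rpow_one] at h ⊢
  norm_num at h ⊢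
  generalize (2:ℝ) ^ (2 * R21) = u at *
  generalize (2:ℝ) ^ (2 * R31) = v at *
  generalize (2:ℝ) ^ (2 * R32) = w at *
  generalize (2:ℝ) ^ (2 * R23) = d at *
  generalize (2:ℝ) ^ (2 * R13) = e at *
  generalize (2:ℝ) ^ (2 * R12) = f at *
  have hsum : g2 / g1 * ((v * w * 4 * (u * 2) - v * w * 4) / (2 * g2 * P))
      + g3 / g1 * ((w * 2 * (v * 2) - w * 2) / (2 * g3 * P))
      + (u * e * d * 8 * (f / u) - u * e * d * 8) / (g1 * P)
      + (u * v * d * 8 * (e / v) - u * v * d * 8) / (g1 * P)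
      = (16 * (e * d * f) + 8 * (u * v * w) - 16 * (u * v * d) - 2 * w) / (2 * g1 * P) := by
    field_simp
    ring
  rw [hsum, div_le_one (by positivity)]
  have hedf : 1 ≤ e * d * f :=
    one_le_mul_of_one_le_of_one_le (one_le_mul_of_one_le_of_one_le he hd) hf
  linarith [mul_le_mul_of_nonneg_left hwd (mul_pos hu hv).le, mul_pos (mul_pos hu hv) hw,
    mul_le_mul_of_nonneg_right hg12 hP.le, mul_le_mul_of_nonneg_right (hg23.trans hg12) hP.le]

lemma relay_power_le_one {g2 g3 P R12 R13 R23 : ℝ} (hP : 0 < P) (hg3 : 0 < g3)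
    (hg23 : g3 ≤ g2) (hr13 : 0 ≤ R13) (hr23 : 0 ≤ R23)
    (hG2 : R13 + R23 ≤ Cg (g3 * P) - 2) (hG4 : R13 + R23 + R12 ≤ Cg (g2 * P + g3 * P) - 3) :
    ((2:ℝ) ^ (2 * (R13 + R23)) - 1) / (g3 * P)
      + (2:ℝ) ^ (2 * (R13 + R23)) * ((2:ℝ) ^ (2 * R12) - 1) / (g2 * P) ≤ 1 := by
  have hg2 : 0 < g2 := hg3.trans_le hg23
  have h2 := two_rpow_two_mul_add_le_of_le_Cg (by positivity) hG2
  have h4 := two_rpow_two_mul_add_le_of_le_Cg (by positivity) hG4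
  have hed : 1 ≤ (2:ℝ) ^ (2 * R13) * (2:ℝ) ^ (2 * R23) :=
    one_le_mul_of_one_le_of_one_le (one_le_two_rpow_two_mul hr13) (one_le_two_rpow_two_mul hr23)
  simp only [mul_add, rpow_add two_pos] at h2 h4 ⊢
  norm_num at h2 h4
  generalize (2:ℝ) ^ (2 * R13) * (2:ℝ) ^ (2 * R23) = e at *
  generalize (2:ℝ) ^ (2 * R12) = f at *
  have h3P : (e - 1) / (g3 * P) ≤ 1 / 2 := by
    rw [div_le_iff₀ (by positivity)]
    linarith
  have h2P : e * (f - 1) / (g2 * P) ≤ 1 / 2 := by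
    rw [div_le_iff₀ (by positivity)]
    nlinarith
  linarith

theorem stmt_11_general
    (P h1 h2 h3 : ℝ) (hP : 0 < P)
    (hh12 : h2 ^ 2 ≤ h1 ^ 2) (hh23 : h3 ^ 2 ≤ h2 ^ 2) (hh3 : 0 < h3 ^ 2)
    (R12 R13 R21 R23 R31 R32 : ℝ)
    (hr12 : 0 ≤ R12) (hr13 : 0 ≤ R13) (hr21 : 0 ≤ R21)
    (hr23 : 0 ≤ R23) (hr31 : 0 ≤ R31)
    (hG1 : R31 + R32 ≤ Cg (h3 ^ 2 * P) - 2)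
    (hG2 : R13 + R23 ≤ Cg (h3 ^ 2 * P) - 2)
    (hG4 : R13 + R23 + R12 ≤ Cg (h2 ^ 2 * P + h3 ^ 2 * P) - 3)
    (hG7 : R21 + R31 + R23 ≤ Cg ((|h2| + |h3|) ^ 2 * P) - 7 / 2)
    (hc3 : R32 ≤ R23)
    (a32b a31b a21b a23u a13u a12u a23b a13b a12b : ℝ)
    (ha32b : a32b = ((2:ℝ) ^ (2 * R32 + 1) - 1) / (2 * h3 ^ 2 * P))
    (ha31b : a31b = (2:ℝ) ^ (2 * R32 + 1) * ((2:ℝ) ^ (2 * R31 + 1) - 1) / (2 * h3 ^ 2 * P))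
    (ha21b : a21b = (2:ℝ) ^ (2 * R31 + 2 * R32 + 2) * ((2:ℝ) ^ (2 * R21 + 1) - 1) / (2 * h2 ^ 2 * P))
    (ha23u : a23u = (2:ℝ) ^ (2 * R21 + 2 * R31 + 2 * R32 + 3) * ((2:ℝ) ^ (2 * (R23 - R32)) - 1) / (h2 ^ 2 * P))
    (ha13u : a13u = (2:ℝ) ^ (2 * R21 + 2 * R31 + 2 * R23 + 3) * ((2:ℝ) ^ (2 * (R13 - R31)) - 1) / (h1 ^ 2 * P))
    (ha12u : a12u = (2:ℝ) ^ (2 * R21 + 2 * R13 + 2 * R23 + 3) * ((2:ℝ) ^ (2 * (R12 - R21)) - 1) / (h1 ^ 2 * P))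
    (ha23b : a23b = h3 ^ 2 / h2 ^ 2 * a32b)
    (ha13b : a13b = h3 ^ 2 / h1 ^ 2 * a31b)
    (ha12b : a12b = h2 ^ 2 / h1 ^ 2 * a21b) :
    a31b + a32b ≤ 1 ∧
    a21b + a23b + a23u ≤ 1 ∧
    a12b + a13b + a12u + a13u ≤ 1 ∧
    ((2:ℝ) ^ (2 * (R13 + R23)) - 1) / (h3 ^ 2 * P)
      + (2:ℝ) ^ (2 * (R13 + R23)) * ((2:ℝ) ^ (2 * R12) - 1) / (h2 ^ 2 * P) ≤ 1 := by
  subst ha32b ha31b ha21b ha23u ha13u ha12u ha23b ha13b ha12b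
  have hcoherent : (|h2| + |h3|) ^ 2 * P ≤ 4 * h2 ^ 2 * P :=
    mul_le_mul_of_nonneg_right (abs_add_abs_sq_le hh23) hP.le
  exact ⟨user3_alloc_le_one (by positivity) hG1,
    user2_alloc_le_one hP hh3 hh23 hr21 hr23 hr31 hG7 (by positivity) hcoherent,
    user1_alloc_le_one hP hh3 hh23 hh12 hr12 hr13 hr23 hc3 hG4,
    relay_power_le_one hP hh3 hh23 hr13 hr23 hG2 hG4⟩

theorem stmt_11
    (P h1 h2 h3 : ℝ) (hP : 0 < P)
    (hh12 : h2 ^ 2 ≤ h1 ^ 2) (hh23 : h3 ^ 2 ≤ h2 ^ 2) (hh3 : 0 < h3 ^ 2)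
    (R12 R13 R21 R23 R31 R32 : ℝ)
    (hr12 : 0 ≤ R12) (hr13 : 0 ≤ R13) (hr21 : 0 ≤ R21)
    (hr23 : 0 ≤ R23) (hr31 : 0 ≤ R31) (hr32 : 0 ≤ R32)
    (hG1 : R31 + R32 ≤ Cg (h3 ^ 2 * P) - 2)
    (hG2 : R13 + R23 ≤ Cg (h3 ^ 2 * P) - 2)
    (hG3 : R12 + R13 + R32 ≤ Cg (h2 ^ 2 * P + h3 ^ 2 * P) - 3)
    (hG4 : R13 + R23 + R12 ≤ Cg (h2 ^ 2 * P + h3 ^ 2 * P) - 3)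
    (hG5 : R12 + R31 + R32 ≤ Cg (h1 ^ 2 * P + h2 ^ 2 * P) - 3)
    (hG6 : R13 + R23 + R21 ≤ Cg (h1 ^ 2 * P + h3 ^ 2 * P) - 3)
    (hG7 : R21 + R31 + R23 ≤ Cg ((|h2| + |h3|) ^ 2 * P) - 7 / 2)
    (hG8 : R21 + R31 + R32 ≤ Cg ((|h2| + |h3|) ^ 2 * P) - 7 / 2)
    (hc1 : R21 ≤ R12) (hc2 : R31 ≤ R13) (hc3 : R32 ≤ R23)
    (a32b a31b a21b a23u a13u a12u a23b a13b a12b : ℝ)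
    (ha32b : a32b = ((2:ℝ) ^ (2 * R32 + 1) - 1) / (2 * h3 ^ 2 * P))
    (ha31b : a31b = (2:ℝ) ^ (2 * R32 + 1) * ((2:ℝ) ^ (2 * R31 + 1) - 1) / (2 * h3 ^ 2 * P))
    (ha21b : a21b = (2:ℝ) ^ (2 * R31 + 2 * R32 + 2) * ((2:ℝ) ^ (2 * R21 + 1) - 1) / (2 * h2 ^ 2 * P))
    (ha23u : a23u = (2:ℝ) ^ (2 * R21 + 2 * R31 + 2 * R32 + 3) * ((2:ℝ) ^ (2 * (R23 - R32)) - 1) / (h2 ^ 2 * P))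
    (ha13u : a13u = (2:ℝ) ^ (2 * R21 + 2 * R31 + 2 * R23 + 3) * ((2:ℝ) ^ (2 * (R13 - R31)) - 1) / (h1 ^ 2 * P))
    (ha12u : a12u = (2:ℝ) ^ (2 * R21 + 2 * R13 + 2 * R23 + 3) * ((2:ℝ) ^ (2 * (R12 - R21)) - 1) / (h1 ^ 2 * P))
    (ha23b : a23b = h3 ^ 2 / h2 ^ 2 * a32b)
    (ha13b : a13b = h3 ^ 2 / h1 ^ 2 * a31b)
    (ha12b : a12b = h2 ^ 2 / h1 ^ 2 * a21b) :
    a31b + a32b ≤ 1 ∧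
    a21b + a23b + a23u ≤ 1 ∧
    a12b + a13b + a12u + a13u ≤ 1 ∧
    ((2:ℝ) ^ (2 * (R13 + R23)) - 1) / (h3 ^ 2 * P)
      + (2:ℝ) ^ (2 * (R13 + R23)) * ((2:ℝ) ^ (2 * R12) - 1) / (h2 ^ 2 * P) ≤ 1 :=
  stmt_11_general P h1 h2 h3 hP hh12 hh23 hh3 R12 R13 R21 R23 R31 R32 hr12 hr13 hr21 hr23 hr31 hG1
    hG2 hG4 hG7 hc3 a32b a31b a21b a23u a13u a12u a23b a13b a12b ha32b ha31b ha21b ha23u ha13u ha12u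
    ha23b ha13b ha12b
end

section
/- (Gap analysis, Case 2: R12 ≥ R21, R13 ≥ R31, R23 ≤ R32.) Suppose the nonnegative rate tuple lies in C̲'_g and additionally R12 ≥ R21, R13 ≥ R31, R23 ≤ R32. Define α32^b = (2^{2R23+1}−1)/(2h3²P), α31^b = 2^{2R23+1}(2^{2R31+1}−1)/(2h3²P), α32^u = 2^{2R31+2R23+2}(2^{2(R32−R23)}−1)/(h3²P), α21^b = 2^{2R32+2R31+2}(2^{2R21+1}−1)/(2h2²P), α13^u = 2^{2R21+2R32+2R31+3}(2^{2(R13−R31)}−1)/(h1²P), α12^u = 2^{2R21+2R32+2R13+3}(2^{2(R12−R21)}−1)/(h1²P), and α23^b = (h3²/h2²)α32^b, α13^b = (h3²/h1²)α31^b, α12^b = (h2²/h1²)α21^b. Then α31^b+α32^b+α32^u ≤ 1, α21^b+α23^b ≤ 1, α12^b+α13^b+α12^u+α13^u ≤ 1, and (2^{2(R13+R23)}−1)/(h3²P) + 2^{2(R13+R23)}(2^{2(R12+R32−R23)}−1)/(h2²P) ≤ 1. -/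
/-!
Write `x_ij = 2^(2 R_ij) > 0`. A constraint `R ≤ C(X) - c` of the region says exactly
`2^(2c) · ∏ x ≤ 1 + X`, and after clearing the SNR denominator each allocation sum is a
polynomial in the `x_ij`. Every claim then follows linearly from a single such constraint
(two for the relay), together with `x23 ≤ x32` and `(|h2| + |h3|)² ≤ 4 h2²`.
-/

theorem two_rpow_le_of_le_Cg {R X c : ℝ} (hX : 0 < 1 + X) (h : R ≤ Cg X - c) :
    (2 : ℝ) ^ (2 * R + 2 * c) ≤ 1 + X := by
  rw [← Real.le_logb_iff_rpow_le one_lt_two hX]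
  unfold Cg at h
  linarith

theorem abs_add_abs_sq_le_four_mul_sq {a b : ℝ} (h : b ^ 2 ≤ a ^ 2) :
    (|a| + |b|) ^ 2 ≤ 4 * a ^ 2 := by
  have hab : |b| ≤ |a| := sq_le_sq.mp h
  nlinarith [abs_nonneg b, sq_abs a]

theorem user3_power_alloc_le_one {P h3 R23 R31 R32 : ℝ} (hP : 0 < P) (hh3 : 0 < h3 ^ 2)
    (hR : R31 + R32 ≤ Cg (h3 ^ 2 * P) - 2) :
    (2:ℝ) ^ (2 * R23 + 1) * ((2:ℝ) ^ (2 * R31 + 1) - 1) / (2 * h3 ^ 2 * P)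
      + ((2:ℝ) ^ (2 * R23 + 1) - 1) / (2 * h3 ^ 2 * P)
      + (2:ℝ) ^ (2 * R31 + 2 * R23 + 2) * ((2:ℝ) ^ (2 * (R32 - R23)) - 1) / (h3 ^ 2 * P) ≤ 1 := by
  have hB := two_rpow_le_of_le_Cg (by positivity) hR
  have h3ne : h3 ≠ 0 := ne_zero_pow two_ne_zero hh3.ne'
  have h2331 : (0:ℝ) < 2 ^ (2 * R23) * 2 ^ (2 * R31) := by positivity
  simp only [mul_add, mul_sub, Real.rpow_add two_pos, Real.rpow_sub two_pos, Real.rpow_one] at hB ⊢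
  norm_num at hB ⊢
  field_simp
  rw [div_le_iff₀ hh3]
  linarith [mul_pos hP hh3]

theorem user2_power_alloc_le_one {P h2 h3 R21 R23 R31 R32 : ℝ} (hP : 0 < P) (hh3 : 0 < h3 ^ 2)
    (hh23 : h3 ^ 2 ≤ h2 ^ 2) (hR31 : 0 ≤ R31) (hR2332 : R23 ≤ R32)
    (hR : R21 + R31 + R32 ≤ Cg ((|h2| + |h3|) ^ 2 * P) - 7 / 2) :
    (2:ℝ) ^ (2 * R32 + 2 * R31 + 2) * ((2:ℝ) ^ (2 * R21 + 1) - 1) / (2 * h2 ^ 2 * P)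
      + h3 ^ 2 / h2 ^ 2 * (((2:ℝ) ^ (2 * R23 + 1) - 1) / (2 * h3 ^ 2 * P)) ≤ 1 := by
  have hh2 : 0 < h2 ^ 2 := hh3.trans_le hh23
  have h2ne : h2 ≠ 0 := ne_zero_pow two_ne_zero hh2.ne'
  have h3ne : h3 ≠ 0 := ne_zero_pow two_ne_zero hh3.ne'
  have hB := two_rpow_le_of_le_Cg (by positivity) hR
  have hSNR : (|h2| + |h3|) ^ 2 * P ≤ 4 * h2 ^ 2 * P :=
    mul_le_mul_of_nonneg_right (abs_add_abs_sq_le_four_mul_sq hh23) hP.le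
  have h2332 : (2:ℝ) ^ (2 * R23) ≤ 2 ^ (2 * R31) * 2 ^ (2 * R32) := calc
    (2:ℝ) ^ (2 * R23) ≤ 2 ^ (2 * R32) := Real.rpow_le_rpow_of_exponent_le one_le_two (by linarith)
    _ ≤ 2 ^ (2 * R31) * 2 ^ (2 * R32) :=
      le_mul_of_one_le_left (by positivity) (Real.one_le_rpow one_le_two (by linarith))
  have h3132 : (0:ℝ) < 2 ^ (2 * R31) * 2 ^ (2 * R32) := by positivity
  simp only [mul_add, Real.rpow_add two_pos, Real.rpow_one] at hB ⊢
  norm_num at hB ⊢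
  field_simp
  rw [div_le_iff₀ hh2]
  linarith [mul_pos hP hh2]

theorem user1_power_alloc_le_one {P h1 h2 h3 R12 R13 R21 R23 R31 R32 : ℝ} (hP : 0 < P)
    (hh3 : 0 < h3 ^ 2) (hh23 : h3 ^ 2 ≤ h2 ^ 2) (hh12 : h2 ^ 2 ≤ h1 ^ 2)
    (hR23 : 0 ≤ R23) (hR2332 : R23 ≤ R32)
    (hR : R12 + R13 + R32 ≤ Cg (h2 ^ 2 * P + h3 ^ 2 * P) - 3) :
    h2 ^ 2 / h1 ^ 2
        * ((2:ℝ) ^ (2 * R32 + 2 * R31 + 2) * ((2:ℝ) ^ (2 * R21 + 1) - 1) / (2 * h2 ^ 2 * P))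
      + h3 ^ 2 / h1 ^ 2
        * ((2:ℝ) ^ (2 * R23 + 1) * ((2:ℝ) ^ (2 * R31 + 1) - 1) / (2 * h3 ^ 2 * P))
      + (2:ℝ) ^ (2 * R21 + 2 * R32 + 2 * R13 + 3) * ((2:ℝ) ^ (2 * (R12 - R21)) - 1) / (h1 ^ 2 * P)
      + (2:ℝ) ^ (2 * R21 + 2 * R32 + 2 * R31 + 3) * ((2:ℝ) ^ (2 * (R13 - R31)) - 1) / (h1 ^ 2 * P)
      ≤ 1 := by
  have hh2 : 0 < h2 ^ 2 := hh3.trans_le hh23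
  have hh1 : 0 < h1 ^ 2 := hh2.trans_le hh12
  have h1ne : h1 ≠ 0 := ne_zero_pow two_ne_zero hh1.ne'
  have h2ne : h2 ≠ 0 := ne_zero_pow two_ne_zero hh2.ne'
  have h3ne : h3 ≠ 0 := ne_zero_pow two_ne_zero hh3.ne'
  have hB := two_rpow_le_of_le_Cg (by positivity) hR
  have hSNR : h2 ^ 2 * P + h3 ^ 2 * P ≤ 2 * (h1 ^ 2 * P) := by nlinarith
  have h23 := Real.one_le_rpow one_le_two (by linarith : 0 ≤ 2 * R23)
  have h2332 : (2:ℝ) ^ (2 * R23) * 2 ^ (2 * R31) ≤ 2 ^ (2 * R31) * 2 ^ (2 * R32) := by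
    rw [mul_comm]
    gcongr
    norm_num
  have h2131 : (0:ℝ) < 2 ^ (2 * R21) * 2 ^ (2 * R31) * 2 ^ (2 * R32) := by positivity
  simp only [mul_add, mul_sub, Real.rpow_add two_pos, Real.rpow_sub two_pos, Real.rpow_one] at hB ⊢
  norm_num at hB ⊢
  field_simp
  rw [div_le_iff₀ hh1]
  linarith [mul_pos hP hh1]

theorem relay_power_le_one_s12 {P h2 h3 R12 R13 R23 R32 : ℝ} (hP : 0 < P)
    (hh3 : 0 < h3 ^ 2) (hh23 : h3 ^ 2 ≤ h2 ^ 2) (hR13 : 0 ≤ R13) (hR23 : 0 ≤ R23)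
    (hR3 : R13 + R23 ≤ Cg (h3 ^ 2 * P) - 2)
    (hR2 : R12 + R13 + R32 ≤ Cg (h2 ^ 2 * P + h3 ^ 2 * P) - 3) :
    ((2:ℝ) ^ (2 * (R13 + R23)) - 1) / (h3 ^ 2 * P)
      + (2:ℝ) ^ (2 * (R13 + R23)) * ((2:ℝ) ^ (2 * (R12 + R32 - R23)) - 1) / (h2 ^ 2 * P) ≤ 1 := by
  have hX3 : 0 < h3 ^ 2 * P := by positivity
  have hX32 : h3 ^ 2 * P ≤ h2 ^ 2 * P := by gcongr
  have hX2 : 0 < h2 ^ 2 * P := hX3.trans_le hX32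
  have hterm3 : ((2:ℝ) ^ (2 * (R13 + R23)) - 1) / (h3 ^ 2 * P) ≤ 1 / 16 := by
    have hB := two_rpow_le_of_le_Cg (by positivity) hR3
    simp only [Real.rpow_add two_pos] at hB
    rw [div_le_iff₀ hX3]
    norm_num at hB
    linarith
  have hterm2 : (2:ℝ) ^ (2 * (R13 + R23)) * ((2:ℝ) ^ (2 * (R12 + R32 - R23)) - 1) / (h2 ^ 2 * P)
      ≤ 15 / 16 := by
    have hB := two_rpow_le_of_le_Cg (by positivity) hR2
    have h1323 : (1:ℝ) ≤ 2 ^ (2 * R13) * 2 ^ (2 * R23) :=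
      one_le_mul_of_one_le_of_one_le (Real.one_le_rpow one_le_two (by linarith))
        (Real.one_le_rpow one_le_two (by linarith))
    simp only [mul_add, mul_sub, Real.rpow_add two_pos, Real.rpow_sub two_pos] at hB ⊢
    rw [div_le_iff₀ hX2]
    norm_num at hB
    field_simp
    linarith
  linarith

theorem stmt_12_general
    (P h1 h2 h3 : ℝ) (hP : 0 < P)
    (hh12 : h2 ^ 2 ≤ h1 ^ 2) (hh23 : h3 ^ 2 ≤ h2 ^ 2) (hh3 : 0 < h3 ^ 2)
    (R12 R13 R21 R23 R31 R32 : ℝ)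
    (hr13 : 0 ≤ R13)
    (hr23 : 0 ≤ R23) (hr31 : 0 ≤ R31)
    (hG1 : R31 + R32 ≤ Cg (h3 ^ 2 * P) - 2)
    (hG2 : R13 + R23 ≤ Cg (h3 ^ 2 * P) - 2)
    (hG3 : R12 + R13 + R32 ≤ Cg (h2 ^ 2 * P + h3 ^ 2 * P) - 3)
    (hG8 : R21 + R31 + R32 ≤ Cg ((|h2| + |h3|) ^ 2 * P) - 7 / 2)
    (hc3 : R23 ≤ R32)
    (a32b a31b a32u a21b a13u a12u a23b a13b a12b : ℝ)
    (ha32b : a32b = ((2:ℝ) ^ (2 * R23 + 1) - 1) / (2 * h3 ^ 2 * P))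
    (ha31b : a31b = (2:ℝ) ^ (2 * R23 + 1) * ((2:ℝ) ^ (2 * R31 + 1) - 1) / (2 * h3 ^ 2 * P))
    (ha32u : a32u = (2:ℝ) ^ (2 * R31 + 2 * R23 + 2) * ((2:ℝ) ^ (2 * (R32 - R23)) - 1) / (h3 ^ 2 * P))
    (ha21b : a21b = (2:ℝ) ^ (2 * R32 + 2 * R31 + 2) * ((2:ℝ) ^ (2 * R21 + 1) - 1) / (2 * h2 ^ 2 * P))
    (ha13u : a13u = (2:ℝ) ^ (2 * R21 + 2 * R32 + 2 * R31 + 3) * ((2:ℝ) ^ (2 * (R13 - R31)) - 1) / (h1 ^ 2 * P))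
    (ha12u : a12u = (2:ℝ) ^ (2 * R21 + 2 * R32 + 2 * R13 + 3) * ((2:ℝ) ^ (2 * (R12 - R21)) - 1) / (h1 ^ 2 * P))
    (ha23b : a23b = h3 ^ 2 / h2 ^ 2 * a32b)
    (ha13b : a13b = h3 ^ 2 / h1 ^ 2 * a31b)
    (ha12b : a12b = h2 ^ 2 / h1 ^ 2 * a21b) :
    a31b + a32b + a32u ≤ 1 ∧
    a21b + a23b ≤ 1 ∧
    a12b + a13b + a12u + a13u ≤ 1 ∧
    ((2:ℝ) ^ (2 * (R13 + R23)) - 1) / (h3 ^ 2 * P)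
      + (2:ℝ) ^ (2 * (R13 + R23)) * ((2:ℝ) ^ (2 * (R12 + R32 - R23)) - 1) / (h2 ^ 2 * P) ≤ 1 := by
  subst ha23b ha13b ha12b ha32b ha31b ha32u ha21b ha13u ha12u
  exact ⟨user3_power_alloc_le_one hP hh3 hG1, user2_power_alloc_le_one hP hh3 hh23 hr31 hc3 hG8,
    user1_power_alloc_le_one hP hh3 hh23 hh12 hr23 hc3 hG3,
    relay_power_le_one_s12 hP hh3 hh23 hr13 hr23 hG2 hG3⟩

theorem stmt_12
    (P h1 h2 h3 : ℝ) (hP : 0 < P)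
    (hh12 : h2 ^ 2 ≤ h1 ^ 2) (hh23 : h3 ^ 2 ≤ h2 ^ 2) (hh3 : 0 < h3 ^ 2)
    (R12 R13 R21 R23 R31 R32 : ℝ)
    (hr12 : 0 ≤ R12) (hr13 : 0 ≤ R13) (hr21 : 0 ≤ R21)
    (hr23 : 0 ≤ R23) (hr31 : 0 ≤ R31) (hr32 : 0 ≤ R32)
    (hG1 : R31 + R32 ≤ Cg (h3 ^ 2 * P) - 2)
    (hG2 : R13 + R23 ≤ Cg (h3 ^ 2 * P) - 2)
    (hG3 : R12 + R13 + R32 ≤ Cg (h2 ^ 2 * P + h3 ^ 2 * P) - 3)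
    (hG4 : R13 + R23 + R12 ≤ Cg (h2 ^ 2 * P + h3 ^ 2 * P) - 3)
    (hG5 : R12 + R31 + R32 ≤ Cg (h1 ^ 2 * P + h2 ^ 2 * P) - 3)
    (hG6 : R13 + R23 + R21 ≤ Cg (h1 ^ 2 * P + h3 ^ 2 * P) - 3)
    (hG7 : R21 + R31 + R23 ≤ Cg ((|h2| + |h3|) ^ 2 * P) - 7 / 2)
    (hG8 : R21 + R31 + R32 ≤ Cg ((|h2| + |h3|) ^ 2 * P) - 7 / 2)
    (hc1 : R21 ≤ R12) (hc2 : R31 ≤ R13) (hc3 : R23 ≤ R32)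
    (a32b a31b a32u a21b a13u a12u a23b a13b a12b : ℝ)
    (ha32b : a32b = ((2:ℝ) ^ (2 * R23 + 1) - 1) / (2 * h3 ^ 2 * P))
    (ha31b : a31b = (2:ℝ) ^ (2 * R23 + 1) * ((2:ℝ) ^ (2 * R31 + 1) - 1) / (2 * h3 ^ 2 * P))
    (ha32u : a32u = (2:ℝ) ^ (2 * R31 + 2 * R23 + 2) * ((2:ℝ) ^ (2 * (R32 - R23)) - 1) / (h3 ^ 2 * P))
    (ha21b : a21b = (2:ℝ) ^ (2 * R32 + 2 * R31 + 2) * ((2:ℝ) ^ (2 * R21 + 1) - 1) / (2 * h2 ^ 2 * P))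
    (ha13u : a13u = (2:ℝ) ^ (2 * R21 + 2 * R32 + 2 * R31 + 3) * ((2:ℝ) ^ (2 * (R13 - R31)) - 1) / (h1 ^ 2 * P))
    (ha12u : a12u = (2:ℝ) ^ (2 * R21 + 2 * R32 + 2 * R13 + 3) * ((2:ℝ) ^ (2 * (R12 - R21)) - 1) / (h1 ^ 2 * P))
    (ha23b : a23b = h3 ^ 2 / h2 ^ 2 * a32b)
    (ha13b : a13b = h3 ^ 2 / h1 ^ 2 * a31b)
    (ha12b : a12b = h2 ^ 2 / h1 ^ 2 * a21b) :
    a31b + a32b + a32u ≤ 1 ∧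
    a21b + a23b ≤ 1 ∧
    a12b + a13b + a12u + a13u ≤ 1 ∧
    ((2:ℝ) ^ (2 * (R13 + R23)) - 1) / (h3 ^ 2 * P)
      + (2:ℝ) ^ (2 * (R13 + R23)) * ((2:ℝ) ^ (2 * (R12 + R32 - R23)) - 1) / (h2 ^ 2 * P) ≤ 1 :=
  stmt_12_general P h1 h2 h3 hP hh12 hh23 hh3 R12 R13 R21 R23 R31 R32 hr13 hr23 hr31 hG1 hG2 hG3 hG8
    hc3 a32b a31b a32u a21b a13u a12u a23b a13b a12b ha32b ha31b ha32u ha21b ha13u ha12u ha23b ha13b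
    ha12b
end

section
/- (Gap analysis, Case 5: R12 ≤ R21, R13 ≥ R31, R23 ≥ R32.) Suppose the nonnegative rate tuple lies in C̲'_g and additionally R12 ≤ R21, R13 ≥ R31, R23 ≥ R32. Define α32^b = (2^{2R32+1}−1)/(2h3²P), α31^b = 2^{2R32+1}(2^{2R31+1}−1)/(2h3²P), α21^b = 2^{2R32+2R31+2}(2^{2R12+1}−1)/(2h2²P), α23^u = 2^{2R12+2R31+2R32+3}(2^{2(R23−R32)}−1)/(h2²P), α21^u = 2^{2R12+2R31+2R23+3}(2^{2(R21−R12)}−1)/(h2²P), α13^u = 2^{2R21+2R31+2R23+3}(2^{2(R13−R31)}−1)/(h1²P), and α23^b = (h3²/h2²)α32^b, α13^b = (h3²/h1²)α31^b, α12^b = (h2²/h1²)α21^b. Then α31^b+α32^b ≤ 1, α21^b+α23^b+α21^u+α23^u ≤ 1, α12^b+α13^b+α13^u ≤ 1, and (2^{2(R13+R23)}−1)/(h3²P) + 2^{2(R13+R23)}(2^{2R12}−1)/(h2²P) + 2^{2(R13+R23+R12)}(2^{2(R21−R12)}−1)/(h1²P) ≤ 1. -/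
set_option maxHeartbeats 1000000 in
theorem stmt_15
    (P h1 h2 h3 : ℝ) (hP : 0 < P)
    (hh12 : h2 ^ 2 ≤ h1 ^ 2) (hh23 : h3 ^ 2 ≤ h2 ^ 2) (hh3 : 0 < h3 ^ 2)
    (R12 R13 R21 R23 R31 R32 : ℝ)
    (hr12 : 0 ≤ R12) (hr13 : 0 ≤ R13) (hr21 : 0 ≤ R21)
    (hr23 : 0 ≤ R23) (hr31 : 0 ≤ R31) (hr32 : 0 ≤ R32)
    (hG1 : R31 + R32 ≤ Cg (h3 ^ 2 * P) - 2)
    (hG2 : R13 + R23 ≤ Cg (h3 ^ 2 * P) - 2)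
    (hG3 : R12 + R13 + R32 ≤ Cg (h2 ^ 2 * P + h3 ^ 2 * P) - 3)
    (hG4 : R13 + R23 + R12 ≤ Cg (h2 ^ 2 * P + h3 ^ 2 * P) - 3)
    (hG5 : R12 + R31 + R32 ≤ Cg (h1 ^ 2 * P + h2 ^ 2 * P) - 3)
    (hG6 : R13 + R23 + R21 ≤ Cg (h1 ^ 2 * P + h3 ^ 2 * P) - 3)
    (hG7 : R21 + R31 + R23 ≤ Cg ((|h2| + |h3|) ^ 2 * P) - 7 / 2)
    (hG8 : R21 + R31 + R32 ≤ Cg ((|h2| + |h3|) ^ 2 * P) - 7 / 2)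
    (hc1 : R12 ≤ R21) (hc2 : R31 ≤ R13) (hc3 : R32 ≤ R23)
    (a32b a31b a21b a23u a21u a13u a23b a13b a12b : ℝ)
    (ha32b : a32b = ((2:ℝ) ^ (2 * R32 + 1) - 1) / (2 * h3 ^ 2 * P))
    (ha31b : a31b = (2:ℝ) ^ (2 * R32 + 1) * ((2:ℝ) ^ (2 * R31 + 1) - 1) / (2 * h3 ^ 2 * P))
    (ha21b : a21b = (2:ℝ) ^ (2 * R32 + 2 * R31 + 2) * ((2:ℝ) ^ (2 * R12 + 1) - 1) / (2 * h2 ^ 2 * P))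
    (ha23u : a23u = (2:ℝ) ^ (2 * R12 + 2 * R31 + 2 * R32 + 3) * ((2:ℝ) ^ (2 * (R23 - R32)) - 1) / (h2 ^ 2 * P))
    (ha21u : a21u = (2:ℝ) ^ (2 * R12 + 2 * R31 + 2 * R23 + 3) * ((2:ℝ) ^ (2 * (R21 - R12)) - 1) / (h2 ^ 2 * P))
    (ha13u : a13u = (2:ℝ) ^ (2 * R21 + 2 * R31 + 2 * R23 + 3) * ((2:ℝ) ^ (2 * (R13 - R31)) - 1) / (h1 ^ 2 * P))
    (ha23b : a23b = h3 ^ 2 / h2 ^ 2 * a32b)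
    (ha13b : a13b = h3 ^ 2 / h1 ^ 2 * a31b)
    (ha12b : a12b = h2 ^ 2 / h1 ^ 2 * a21b) :
    a31b + a32b ≤ 1 ∧
    a21b + a23b + a21u + a23u ≤ 1 ∧
    a12b + a13b + a13u ≤ 1 ∧
    ((2:ℝ) ^ (2 * (R13 + R23)) - 1) / (h3 ^ 2 * P)
      + (2:ℝ) ^ (2 * (R13 + R23)) * ((2:ℝ) ^ (2 * R12) - 1) / (h2 ^ 2 * P)
      + (2:ℝ) ^ (2 * (R13 + R23 + R12)) * ((2:ℝ) ^ (2 * (R21 - R12)) - 1) / (h1 ^ 2 * P) ≤ 1 := by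
  have h2sq : (0:ℝ) < h2 ^ 2 := lt_of_lt_of_le hh3 hh23
  have h1sq : (0:ℝ) < h1 ^ 2 := lt_of_lt_of_le h2sq hh12
  have hp3 : (0:ℝ) < h3 ^ 2 * P := mul_pos hh3 hP
  have hp2 : (0:ℝ) < h2 ^ 2 * P := mul_pos h2sq hP
  have hp1 : (0:ℝ) < h1 ^ 2 * P := mul_pos h1sq hP
  have hne3 : h3 ≠ 0 := by intro h; rw [h] at hh3; simp at hh3
  have hne2 : h2 ≠ 0 := by intro h; rw [h] at h2sq; simp at h2sq
  have hne1 : h1 ≠ 0 := by intro h; rw [h] at h1sq; simp at h1sq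
  have hPne : P ≠ 0 := ne_of_gt hP
  have key : ∀ r c y : ℝ, 0 < 1 + y → r ≤ Cg y - c →
      (2:ℝ) ^ (2 * r) * (2:ℝ) ^ (2 * c) ≤ 1 + y := by
    intro r c y hy h
    have h' : 2 * r + 2 * c ≤ Real.logb 2 (1 + y) := by
      simp only [Cg] at h; linarith
    calc (2:ℝ) ^ (2 * r) * (2:ℝ) ^ (2 * c) = (2:ℝ) ^ (2 * r + 2 * c) :=
          (Real.rpow_add two_pos _ _).symm
      _ ≤ (2:ℝ) ^ (Real.logb 2 (1 + y)) :=
          Real.rpow_le_rpow_of_exponent_le one_le_two h'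
      _ = 1 + y := Real.rpow_logb (by norm_num) (by norm_num) hy
  have padd : ∀ x y : ℝ, (2:ℝ) ^ (x + y) = (2:ℝ) ^ x * (2:ℝ) ^ y := Real.rpow_add two_pos
  have psub : ∀ x y : ℝ, (2:ℝ) ^ (x - y) = (2:ℝ) ^ x / (2:ℝ) ^ y := Real.rpow_sub two_pos
  have c2' : (2:ℝ) ^ ((2:ℝ)) = 4 := by
    rw [show ((2:ℝ)) = ((2:ℕ):ℝ) by norm_num, Real.rpow_natCast]; norm_num
  have c3' : (2:ℝ) ^ ((3:ℝ)) = 8 := by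
    rw [show ((3:ℝ)) = ((3:ℕ):ℝ) by norm_num, Real.rpow_natCast]; norm_num
  have c22 : (2:ℝ) ^ ((2:ℝ) * 2) = 16 := by
    rw [show ((2:ℝ) * 2) = ((4:ℕ):ℝ) by norm_num, Real.rpow_natCast]; norm_num
  have c23 : (2:ℝ) ^ ((2:ℝ) * 3) = 64 := by
    rw [show ((2:ℝ) * 3) = ((6:ℕ):ℝ) by norm_num, Real.rpow_natCast]; norm_num
  have c27 : (2:ℝ) ^ ((2:ℝ) * (7 / 2)) = 128 := by
    rw [show ((2:ℝ) * (7 / 2)) = ((7:ℕ):ℝ) by norm_num, Real.rpow_natCast]; norm_num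
  -- atoms
  set A := (2:ℝ) ^ (2 * R12) with hA
  set B := (2:ℝ) ^ (2 * R31) with hB
  set C := (2:ℝ) ^ (2 * R32) with hC
  set D := (2:ℝ) ^ (2 * R23) with hD
  set E := (2:ℝ) ^ (2 * R21) with hE
  set F := (2:ℝ) ^ (2 * R13) with hF
  have hApos : 0 < A := Real.rpow_pos_of_pos two_pos _
  have hBpos : 0 < B := Real.rpow_pos_of_pos two_pos _
  have hCpos : 0 < C := Real.rpow_pos_of_pos two_pos _
  have hDpos : 0 < D := Real.rpow_pos_of_pos two_pos _
  have hEpos : 0 < E := Real.rpow_pos_of_pos two_pos _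
  have hFpos : 0 < F := Real.rpow_pos_of_pos two_pos _
  have one_le : ∀ x : ℝ, 0 ≤ x → (1:ℝ) ≤ (2:ℝ) ^ x := by
    intro x hx
    have := Real.rpow_le_rpow_of_exponent_le one_le_two hx
    rwa [Real.rpow_zero] at this
  have hA1 : 1 ≤ A := one_le _ (by linarith)
  have hB1 : 1 ≤ B := one_le _ (by linarith)
  have hC1 : 1 ≤ C := one_le _ (by linarith)
  have hD1 : 1 ≤ D := one_le _ (by linarith)
  have hE1 : 1 ≤ E := one_le _ (by linarith)
  have hF1 : 1 ≤ F := one_le _ (by linarith)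
  have hAE : A ≤ E := Real.rpow_le_rpow_of_exponent_le one_le_two (by linarith)
  have hCD : C ≤ D := Real.rpow_le_rpow_of_exponent_le one_le_two (by linarith)
  -- constraint consequences
  have k1 := key (R31 + R32) 2 (h3 ^ 2 * P) (by positivity) hG1
  rw [c22, show 2 * (R31 + R32) = 2 * R31 + 2 * R32 by ring, padd] at k1
  have k2 := key (R13 + R23) 2 (h3 ^ 2 * P) (by positivity) hG2
  rw [c22, show 2 * (R13 + R23) = 2 * R13 + 2 * R23 by ring, padd] at k2
  have k4 := key (R13 + R23 + R12) 3 (h2 ^ 2 * P + h3 ^ 2 * P) (by positivity) hG4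
  rw [c23, show 2 * (R13 + R23 + R12) = 2 * R13 + 2 * R23 + 2 * R12 by ring, padd, padd] at k4
  have k6 := key (R13 + R23 + R21) 3 (h1 ^ 2 * P + h3 ^ 2 * P) (by positivity) hG6
  rw [c23, show 2 * (R13 + R23 + R21) = 2 * R13 + 2 * R23 + 2 * R21 by ring, padd, padd] at k6
  have k7 := key (R21 + R31 + R23) (7 / 2) ((|h2| + |h3|) ^ 2 * P) (by positivity) hG7
  rw [c27, show 2 * (R21 + R31 + R23) = 2 * R21 + 2 * R31 + 2 * R23 by ring, padd, padd] at k7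
  have h32 : |h3| ≤ |h2| := by
    have h := Real.sqrt_le_sqrt hh23
    rwa [Real.sqrt_sq_eq_abs, Real.sqrt_sq_eq_abs] at h
  have habs : (|h2| + |h3|) ^ 2 ≤ 4 * h2 ^ 2 := by
    have h' : |h2| + |h3| ≤ 2 * |h2| := by linarith
    calc (|h2| + |h3|) ^ 2 ≤ (2 * |h2|) ^ 2 := by
          apply pow_le_pow_left₀ (by positivity) h'
      _ = 4 * h2 ^ 2 := by rw [mul_pow, sq_abs]; norm_num
  have k7' : E * B * D * 128 ≤ 1 + 4 * (h2 ^ 2 * P) := by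
    have := mul_le_mul_of_nonneg_right habs hP.le
    linarith
  have hBC1 : (1:ℝ) ≤ B * C := by
    calc (1:ℝ) = 1 * 1 := by norm_num
      _ ≤ B * C := mul_le_mul hB1 hC1 zero_le_one (by linarith)
  have h3big : 15 ≤ h3 ^ 2 * P := by linarith [k1]
  have h32P : h3 ^ 2 * P ≤ h2 ^ 2 * P := mul_le_mul_of_nonneg_right hh23 hP.le
  have h21P : h2 ^ 2 * P ≤ h1 ^ 2 * P := mul_le_mul_of_nonneg_right hh12 hP.le
  -- power rewrites
  have e32 : (2:ℝ) ^ (2 * R32 + 1) = 2 * C := by rw [padd, Real.rpow_one]; ring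
  have e31 : (2:ℝ) ^ (2 * R31 + 1) = 2 * B := by rw [padd, Real.rpow_one]; ring
  have e12 : (2:ℝ) ^ (2 * R12 + 1) = 2 * A := by rw [padd, Real.rpow_one]; ring
  have eBC : (2:ℝ) ^ (2 * R32 + 2 * R31 + 2) = 4 * (B * C) := by
    rw [padd, padd, c2']; ring
  have eABC : (2:ℝ) ^ (2 * R12 + 2 * R31 + 2 * R32 + 3) = 8 * (A * B * C) := by
    rw [padd, padd, padd, c3']; ring
  have eABD : (2:ℝ) ^ (2 * R12 + 2 * R31 + 2 * R23 + 3) = 8 * (A * B * D) := by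
    rw [padd, padd, padd, c3']; ring
  have eEBD : (2:ℝ) ^ (2 * R21 + 2 * R31 + 2 * R23 + 3) = 8 * (E * B * D) := by
    rw [padd, padd, padd, c3']; ring
  have eDC : (2:ℝ) ^ (2 * (R23 - R32)) = D / C := by
    rw [show 2 * (R23 - R32) = 2 * R23 - 2 * R32 by ring, psub]
  have eEA : (2:ℝ) ^ (2 * (R21 - R12)) = E / A := by
    rw [show 2 * (R21 - R12) = 2 * R21 - 2 * R12 by ring, psub]
  have eFB : (2:ℝ) ^ (2 * (R13 - R31)) = F / B := by
    rw [show 2 * (R13 - R31) = 2 * R13 - 2 * R31 by ring, psub]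
  have eFD : (2:ℝ) ^ (2 * (R13 + R23)) = F * D := by
    rw [show 2 * (R13 + R23) = 2 * R13 + 2 * R23 by ring, padd]
  have eFDA : (2:ℝ) ^ (2 * (R13 + R23 + R12)) = F * D * A := by
    rw [show 2 * (R13 + R23 + R12) = 2 * R13 + 2 * R23 + 2 * R12 by ring, padd, padd]
  -- goal 1
  have g1 : a31b + a32b = (4 * (B * C) - 1) / (2 * (h3 ^ 2 * P)) := by
    rw [ha31b, ha32b, e32, e31]
    field_simp
    ring
  have goal1 : a31b + a32b ≤ 1 := by
    rw [g1, div_le_one (by positivity)]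
    linarith [k1]
  -- goal 2
  have g2 : a21b + a23b + a21u + a23u =
      (16 * (B * D * E) - 8 * (A * B * C) - 4 * (B * C) + 2 * C - 1) / (2 * (h2 ^ 2 * P)) := by
    rw [ha21b, ha23b, ha21u, ha23u, ha32b, e32, e12, eBC, eABC, eABD, eDC, eEA]
    field_simp
    ring
  have hAB1 : (1:ℝ) ≤ A * B := by
    calc (1:ℝ) = 1 * 1 := by norm_num
      _ ≤ A * B := mul_le_mul hA1 hB1 zero_le_one (by linarith)
  have hABC : C ≤ A * B * C := by
    calc C = 1 * C := (one_mul C).symm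
      _ ≤ A * B * C := mul_le_mul_of_nonneg_right hAB1 (by linarith)
  have h2big : 15 ≤ h2 ^ 2 * P := le_trans h3big h32P
  have goal2 : a21b + a23b + a21u + a23u ≤ 1 := by
    rw [g2, div_le_one (by positivity)]
    have hBC0 : (0:ℝ) ≤ B * C := by linarith
    linarith [k7', hABC, hBC0, h2big]
  -- goal 3
  have g3 : a12b + a13b + a13u =
      (8 * (F * D * E) - 8 * (E * B * D) + 4 * (A * B * C) - C) / (h1 ^ 2 * P) := by
    rw [ha12b, ha13b, ha13u, ha21b, ha31b, e32, e31, e12, eBC, eEBD, eFB]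
    field_simp
    ring
  have hmm : A * B * C ≤ E * B * D := by
    calc A * B * C ≤ E * B * C :=
          mul_le_mul_of_nonneg_right (mul_le_mul_of_nonneg_right hAE hBpos.le) hCpos.le
      _ ≤ E * B * D := mul_le_mul_of_nonneg_left hCD (by positivity)
  have h1big : 15 ≤ h1 ^ 2 * P := le_trans h2big h21P
  have goal3 : a12b + a13b + a13u ≤ 1 := by
    rw [g3, div_le_one (by positivity)]
    have hEBD0 : (0:ℝ) ≤ E * B * D := by positivity
    linarith [k6, hmm, hEBD0, h1big, h32P, h21P]
  -- goal 4
  have hFD1 : (1:ℝ) ≤ F * D := by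
    calc (1:ℝ) = 1 * 1 := by norm_num
      _ ≤ F * D := mul_le_mul hF1 hD1 zero_le_one (by linarith)
  have hFDA1 : (1:ℝ) ≤ F * D * A := by
    calc (1:ℝ) = 1 * 1 := by norm_num
      _ ≤ (F * D) * A := mul_le_mul hFD1 hA1 zero_le_one (by linarith)
  have ht1 : (F * D - 1) / (h3 ^ 2 * P) ≤ 1 / 16 := by
    rw [div_le_iff₀ hp3]; linarith [k2, h3big]
  have ht2 : F * D * (A - 1) / (h2 ^ 2 * P) ≤ 1 / 8 := by
    rw [div_le_iff₀ hp2]; linarith [k4, hFD1, h32P, h2big]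
  have ht3 : (F * D * E - F * D * A) / (h1 ^ 2 * P) ≤ 1 / 8 := by
    rw [div_le_iff₀ hp1]; linarith [k6, hFDA1, h32P, h21P, h1big]
  have goal4 : ((2:ℝ) ^ (2 * (R13 + R23)) - 1) / (h3 ^ 2 * P)
      + (2:ℝ) ^ (2 * (R13 + R23)) * ((2:ℝ) ^ (2 * R12) - 1) / (h2 ^ 2 * P)
      + (2:ℝ) ^ (2 * (R13 + R23 + R12)) * ((2:ℝ) ^ (2 * (R21 - R12)) - 1) / (h1 ^ 2 * P) ≤ 1 := by
    rw [eFD, eFDA, eEA, ← hA]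
    have t3eq : F * D * A * (E / A - 1) = F * D * E - F * D * A := by
      field_simp
    rw [t3eq]
    linarith [ht1, ht2, ht3]
  exact ⟨goal1, goal2, goal3, goal4⟩
end
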